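/- Fix D ≥ 1, K ≥ 1, and let L be a nonempty list of states in (Fin D → Fin K) of length n. Let P : (Fin D → Fin K) → ℝ be the empirical joint distribution of L, and for each coordinate d : Fin D let P_d : Fin K → ℝ be the empirical distribution of the list of d-th coordinates of the elements of L. Then H(P) ≤ ∑_{d} H(P_d); that is, the sub-additivity gap δ = ∑_d H(P_d) − H(P) incurred by treating the D state elements as independent is nonnegative. -/

import Mathlib

/-! Gibbs' inequality against the product `q` of the coordinate marginals of `p` gives
`H(p) ≤ -∑ p log q`; since `log q` splits into a sum over coordinates, the right-hand side is
the sum of the entropies of the marginals. The empirical distribution of the list of `d`-th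
coordinates is exactly the `d`-th marginal of the joint empirical distribution. -/

/-- Shannon entropy of a probability vector on a finite type, with the
convention `0 * log 0 = 0` (automatic since `Real.log 0 = 0`). -/
noncomputable def shannonEntropy {α : Type*} [Fintype α] (p : α → ℝ) : ℝ :=
  -∑ a, p a * Real.log (p a)

/-- The empirical distribution of a list `L` over a finite type `α`:
each `a : α` gets mass `(count of a in L) / (length of L)`. -/
noncomputable def empiricalDist {α : Type*} [DecidableEq α] (L : List α) (a : α) : ℝ :=
  (L.count a : ℝ) / (L.length : ℝ)

open Finset Real

lemma mul_log_sub_mul_log_le_sub {p q : ℝ} (hp : 0 ≤ p) (hq : 0 ≤ q) (hpq : p ≠ 0 → q ≠ 0) :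
    p * log q - p * log p ≤ q - p := by
  rcases hp.eq_or_lt with rfl | hp
  · simpa using hq
  have hq : 0 < q := hq.lt_of_ne' (hpq hp.ne')
  calc p * log q - p * log p = p * log (q / p) := by rw [log_div hq.ne' hp.ne']; ring
    _ ≤ p * (q / p - 1) := by gcongr; exact log_le_sub_one_of_pos (by positivity)
    _ = q - p := by field_simp

/-- Gibbs' inequality. -/
theorem sum_mul_log_le_sum_mul_log {ι : Type*} (s : Finset ι) {p q : ι → ℝ}
    (hp : ∀ a ∈ s, 0 ≤ p a) (hq : ∀ a ∈ s, 0 ≤ q a) (hpq : ∀ a ∈ s, p a ≠ 0 → q a ≠ 0)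
    (hsum : ∑ a ∈ s, q a ≤ ∑ a ∈ s, p a) :
    ∑ a ∈ s, p a * log (q a) ≤ ∑ a ∈ s, p a * log (p a) := by
  have := sum_le_sum fun a ha => mul_log_sub_mul_log_le_sub (hp a ha) (hq a ha) (hpq a ha)
  rw [sum_sub_distrib, sum_sub_distrib] at this
  linarith

theorem shannonEntropy_le_neg_sum_mul_log {α : Type*} [Fintype α] {p q : α → ℝ}
    (hp : 0 ≤ p) (hq : 0 ≤ q) (hpq : ∀ a, p a ≠ 0 → q a ≠ 0) (hsum : ∑ a, q a = ∑ a, p a) :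
    shannonEntropy p ≤ -∑ a, p a * log (q a) :=
  neg_le_neg <| sum_mul_log_le_sum_mul_log _ (fun a _ => hp a) (fun a _ => hq a)
    (fun a _ => hpq a) hsum.le

section Pushforward

variable {α β : Type*} [Fintype α] [DecidableEq β]

noncomputable def pushforward (f : α → β) (p : α → ℝ) (b : β) : ℝ :=
  ∑ a with f a = b, p a

theorem sum_pushforward_mul [Fintype β] (f : α → β) (p : α → ℝ) (g : β → ℝ) :
    ∑ b, pushforward f p b * g b = ∑ a, p a * g (f a) := by
  rw [← sum_fiberwise univ f]
  refine sum_congr rfl fun b _ => ?_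
  rw [pushforward, sum_mul]
  exact sum_congr rfl fun a ha => by rw [(mem_filter.1 ha).2]

theorem sum_pushforward [Fintype β] (f : α → β) (p : α → ℝ) :
    ∑ b, pushforward f p b = ∑ a, p a := by
  simpa using sum_pushforward_mul f p 1

theorem le_pushforward_apply {p : α → ℝ} (hp : 0 ≤ p) (f : α → β) (a : α) :
    p a ≤ pushforward f p (f a) :=
  single_le_sum (fun a _ => hp a) (mem_filter.2 ⟨mem_univ a, rfl⟩)

theorem pushforward_nonneg {p : α → ℝ} (hp : 0 ≤ p) (f : α → β) : 0 ≤ pushforward f p :=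
  fun _ => sum_nonneg fun a _ => hp a

end Pushforward

section Subadditivity

variable {ι : Type*} [Fintype ι] [DecidableEq ι] {β : ι → Type*} [∀ i, Fintype (β i)]
  [∀ i, DecidableEq (β i)]

theorem sum_mul_log_prod_pushforward_eval {p : ((i : ι) → β i) → ℝ} (hp : 0 ≤ p) :
    ∑ a, p a * log (∏ i, pushforward (fun a => a i) p (a i)) =
      ∑ i, ∑ b, pushforward (fun a => a i) p b * log (pushforward (fun a => a i) p b) := by
  calc ∑ a, p a * log (∏ i, pushforward (fun a => a i) p (a i))
      = ∑ a, ∑ i, p a * log (pushforward (fun a => a i) p (a i)) := by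
        refine sum_congr rfl fun a _ => ?_
        rcases (hp a).eq_or_lt with ha | ha
        · simp [← ha]
        rw [log_prod fun i _ => (ha.trans_le (le_pushforward_apply hp _ a)).ne', mul_sum]
    _ = _ := by
        rw [sum_comm]
        exact sum_congr rfl fun i _ => by rw [sum_pushforward_mul]

theorem shannonEntropy_le_sum_shannonEntropy_pushforward_eval {p : ((i : ι) → β i) → ℝ}
    (hp : 0 ≤ p) (hp1 : ∑ a, p a = 1) :
    shannonEntropy p ≤ ∑ i, shannonEntropy (pushforward (fun a => a i) p) := by
  have hq : 0 ≤ fun a : (i : ι) → β i => ∏ i, pushforward (fun a => a i) p (a i) :=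
    fun a => prod_nonneg fun i _ => pushforward_nonneg hp _ _
  have hpq (a) (ha : p a ≠ 0) : ∏ i, pushforward (fun a => a i) p (a i) ≠ 0 :=
    prod_ne_zero_iff.2 fun i _ =>
      (((hp a).lt_of_ne' ha).trans_le (le_pushforward_apply hp _ a)).ne'
  have hsum : ∑ a : (i : ι) → β i, ∏ i, pushforward (fun a => a i) p (a i) = ∑ a, p a := by
    simp [← Fintype.prod_sum, sum_pushforward, hp1]
  calc shannonEntropy p ≤ _ := shannonEntropy_le_neg_sum_mul_log hp hq hpq hsum
    _ = _ := by
      rw [sum_mul_log_prod_pushforward_eval hp, ← sum_neg_distrib]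
      rfl

end Subadditivity

section Empirical

variable {α β : Type*} [DecidableEq α] [DecidableEq β]

theorem count_map_eq_sum_count [Fintype α] (L : List α) (f : α → β) (b : β) :
    (L.map f).count b = ∑ a with f a = b, L.count a := by
  induction L with
  | nil => simp
  | cons x L ih =>
    simp [List.count_cons, ih, sum_add_distrib]

theorem sum_count_eq_length [Fintype α] (L : List α) : ∑ a, L.count a = L.length := by
  simpa using Multiset.sum_count_eq_card (s := univ) (m := (L : Multiset α)) (by simp)

theorem empiricalDist_nonneg (L : List α) : 0 ≤ empiricalDist L :=
  fun _ => by unfold empiricalDist; positivity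

theorem sum_empiricalDist [Fintype α] {L : List α} (hL : L ≠ []) : ∑ a, empiricalDist L a = 1 := by
  have : (L.length : ℝ) ≠ 0 := by simpa using hL
  simp only [empiricalDist, ← sum_div, ← Nat.cast_sum, sum_count_eq_length, div_self this]

theorem empiricalDist_map [Fintype α] (L : List α) (f : α → β) :
    empiricalDist (L.map f) = pushforward f (empiricalDist L) := by
  ext b
  simp only [empiricalDist, pushforward, count_map_eq_sum_count, List.length_map, Nat.cast_sum,
    sum_div]

end Empirical

theorem empirical_entropy_le_sum_coordinate_entropies_general (D K : ℕ)
    (L : List (Fin D → Fin K)) (hL : L ≠ []) :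
    shannonEntropy (empiricalDist L) ≤
      ∑ d : Fin D, shannonEntropy (empiricalDist (L.map (fun s => s d))) := by
  simp only [empiricalDist_map]
  exact shannonEntropy_le_sum_shannonEntropy_pushforward_eval (empiricalDist_nonneg L)
    (sum_empiricalDist hL)

/-- The entropy of the empirical joint distribution of a nonempty list of states in
`Fin D → Fin K` is at most the sum over the `D` coordinates of the entropies of the
per-coordinate empirical distributions: the sub-additivity gap is nonnegative. -/
theorem empirical_entropy_le_sum_coordinate_entropies (D K : ℕ) (hD : 1 ≤ D) (hK : 1 ≤ K)
    (L : List (Fin D → Fin K)) (hL : L ≠ []) :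
    shannonEntropy (empiricalDist L) ≤
      ∑ d : Fin D, shannonEntropy (empiricalDist (L.map (fun s => s d))) :=
  empirical_entropy_le_sum_coordinate_entropies_general D K L hL
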